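/- Let α be an irrational real number whose partial quotients tend to infinity. Then for every ε > 1/4, the set {x ∈ [0,1] : liminf_{q→+∞} q·‖qα − x‖ = ε} is empty; equivalently, Bad^ε_+(α) = {x ∈ [0,1] : liminf_{q→+∞} q·‖qα − x‖ ≥ ε} is empty for ε > 1/4. -/

import Mathlib

open Filter MeasureTheory

/-- Distance from a real number to the nearest integer. -/
noncomputable def nint (x : ℝ) : ℝ := |x - round x|

/-- The `(k+1)`-st partial quotient of the continued fraction of `α`. -/
noncomputable def partialQuotient (α : ℝ) (k : ℕ) : ℝ :=
  (((GenContFract.of α).partDens.get? k).getD 0)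

/-- The partial quotients of `α` tend to infinity. -/
def PartialQuotientsTendToInfinity (α : ℝ) : Prop :=
  Tendsto (fun k : ℕ => partialQuotient α k) atTop atTop

/-- The one-sided set `Bad^ε_+(α)`, with `q` ranging over positive integers. -/
noncomputable def badSetPlus (α ε : ℝ) : Set ℝ :=
  {x ∈ Set.Icc (0 : ℝ) 1 |
    ε ≤ Filter.liminf (fun q : ℕ => (q : ℝ) * nint (q * α - x)) Filter.atTop}

/-
Let `t_n` be the Gauss-map orbit of `fract α`, `p_n / q_n` the convergents of `α` and
`η_n = t_0 ⋯ t_{n-1} = |q_{n-1} α - p_{n-1}|`, so that `q_n η_{n+1} ≤ t_n`. Expand `x` greedily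
along the `q_n`, each digit taken one above the floor: the partial sums `Q_n = ∑_{k<n} (c_k + 1) q_k`
satisfy `Q_n α - x ≡ ±d_n (mod 1)` with `0 ≤ d_n ≤ η_n` and `Q_n = O(q_n)`. Removing one copy of `q_n`
from `Q_{n+1}` gives an integer `q` with `q ‖q α - x‖ ≤ u_n (1 - u_{n+1}) + 4 t_n`, where
`u_n = d_n / η_n ∈ [0, 1]`. As `u (1 - u) ≤ 1/4`, the bound `u_n (1 - u_{n+1}) ≥ 1/4 + δ` forces
`u_{n+1} ≤ u_n - δ`, which cannot hold for all large `n`. When the partial quotients tend to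
infinity, `t_n → 0`, hence `liminf q ‖q α - x‖ ≤ 1/4` for every `x`.
-/

open Filter Topology

theorem frequently_mul_one_sub_succ_le {u : ℕ → ℝ} (h0 : ∀ n, 0 ≤ u n) (h1 : ∀ n, u n ≤ 1)
    {η : ℝ} (hη : 0 < η) : ∃ᶠ n in atTop, u n * (1 - u (n + 1)) ≤ 1 / 4 + η := by
  by_contra h
  simp only [not_frequently, not_le] at h
  obtain ⟨N, hN⟩ := eventually_atTop.1 h
  have hstep : ∀ n ≥ N, u (n + 1) ≤ u n - η := by
    intro n hn
    by_contra! hlt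
    have hprod : u n * (u n - u (n + 1)) ≤ u n * η :=
      mul_le_mul_of_nonneg_left (by linarith) (h0 n)
    nlinarith [hN n hn, sq_nonneg (u n - 1 / 2), h1 n]
  have hdecr : ∀ k : ℕ, u (N + k) ≤ u N - k * η := by
    intro k
    induction k with
    | zero => simp
    | succ k ih =>
      have := hstep (N + k) (Nat.le_add_right N k)
      rw [← add_assoc]
      push_cast
      linarith
  obtain ⟨k, hk⟩ := exists_nat_gt η⁻¹
  have hkη : 1 < k * η := by rwa [inv_lt_iff_one_lt_mul₀ hη] at hk
  linarith [hdecr k, h0 (N + k), h1 N]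

theorem nint_le_abs_of_eq_intCast_add {y z : ℝ} (k : ℤ) (h : y = k + z) : nint y ≤ |z| :=
  calc nint y ≤ |y - k| := round_le y k
    _ = |z| := by rw [h, add_sub_cancel_left]

namespace GaussMap

noncomputable def orbit (α : ℝ) : ℕ → ℝ
  | 0 => Int.fract α
  | n + 1 => Int.fract (orbit α n)⁻¹

noncomputable def digit (α : ℝ) (n : ℕ) : ℕ := ⌊(orbit α n)⁻¹⌋₊

/- Indexing: `den α (n + 1) = q_n` and `num α (n + 1) = p_n` are the convergents of `α`, and
`gap α n = t_0 ⋯ t_{n-1} = |q_{n-1} α - p_{n-1}|` (see `den_mul_sub_num`). -/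

noncomputable def gap (α : ℝ) : ℕ → ℝ
  | 0 => 1
  | n + 1 => gap α n * orbit α n

noncomputable def den (α : ℝ) : ℕ → ℕ
  | 0 => 0
  | 1 => 1
  | n + 2 => digit α n * den α (n + 1) + den α n

noncomputable def num (α : ℝ) : ℕ → ℤ
  | 0 => 1
  | 1 => ⌊α⌋
  | n + 2 => digit α n * num α (n + 1) + num α n

variable {α : ℝ}

theorem orbit_nonneg (n : ℕ) : 0 ≤ orbit α n := by
  cases n <;> exact Int.fract_nonneg _

theorem orbit_lt_one (n : ℕ) : orbit α n < 1 := by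
  cases n <;> exact Int.fract_lt_one _

theorem digit_add_orbit_succ (n : ℕ) : (digit α n : ℝ) + orbit α (n + 1) = (orbit α n)⁻¹ := by
  rw [digit, natCast_floor_eq_intCast_floor (inv_nonneg.2 (orbit_nonneg n))]
  exact Int.floor_add_fract _

theorem orbit_mul_digit_le_one (n : ℕ) : orbit α n * digit α n ≤ 1 :=
  calc orbit α n * digit α n ≤ orbit α n * (orbit α n)⁻¹ :=
        mul_le_mul_of_nonneg_left (Nat.floor_le (inv_nonneg.2 (orbit_nonneg n))) (orbit_nonneg n)
    _ ≤ 1 := mul_inv_le_one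

theorem tendsto_orbit_zero (h : Tendsto (fun n => (digit α n : ℝ)) atTop atTop) :
    Tendsto (orbit α) atTop (𝓝 0) := by
  refine tendsto_of_tendsto_of_tendsto_of_le_of_le' tendsto_const_nhds h.inv_tendsto_atTop
    (Eventually.of_forall orbit_nonneg) ?_
  filter_upwards [h.eventually_gt_atTop 0] with n hn
  rw [Pi.inv_apply, ← one_div, le_div_iff₀ hn]
  exact orbit_mul_digit_le_one n

theorem orbit_irrational (hα : Irrational α) : ∀ n, Irrational (orbit α n)
  | 0 => hα.sub_intCast ⌊α⌋
  | n + 1 => (orbit_irrational hα n).inv.sub_intCast ⌊(orbit α n)⁻¹⌋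

theorem orbit_pos (hα : Irrational α) (n : ℕ) : 0 < orbit α n :=
  (orbit_nonneg n).lt_of_ne' (orbit_irrational hα n).ne_zero

theorem one_le_digit (hα : Irrational α) (n : ℕ) : 1 ≤ digit α n :=
  Nat.le_floor <| by
    rw [Nat.cast_one, one_le_inv₀ (orbit_pos hα n)]
    exact (orbit_lt_one n).le

theorem gap_pos (hα : Irrational α) : ∀ n, 0 < gap α n
  | 0 => one_pos
  | n + 1 => mul_pos (gap_pos hα n) (orbit_pos hα n)

theorem gap_eq_digit_mul_add (hα : Irrational α) (n : ℕ) :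
    gap α n = digit α n * gap α (n + 1) + gap α (n + 2) := by
  have ht := (orbit_pos hα n).ne'
  calc gap α n = gap α n * orbit α n * (orbit α n)⁻¹ := by field_simp
    _ = _ := by rw [← digit_add_orbit_succ]; simp only [gap]; ring

theorem den_succ_le_den_add_two (hα : Irrational α) (n : ℕ) : den α (n + 1) ≤ den α (n + 2) :=
  (Nat.le_mul_of_pos_left _ (one_le_digit hα n)).trans (Nat.le_add_right _ _)

theorem den_mono (hα : Irrational α) : Monotone (den α) :=
  monotone_nat_of_le_succ fun n => by
    cases n with
    | zero => exact Nat.zero_le _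
    | succ n => exact den_succ_le_den_add_two hα n

theorem one_le_den_succ (hα : Irrational α) (n : ℕ) : 1 ≤ den α (n + 1) :=
  den_mono hα (Nat.le_add_left 1 n)

theorem tendsto_den (hα : Irrational α) : Tendsto (den α) atTop atTop := by
  have : StrictMono fun n => den α (n + 2) := strictMono_nat_of_lt_succ fun n => by
    show den α (n + 2) < digit α (n + 1) * den α (n + 2) + den α (n + 1)
    have := one_le_digit hα (n + 1)
    have := one_le_den_succ hα n
    nlinarith
  exact (tendsto_add_atTop_iff_nat 2).1 this.tendsto_atTop

theorem den_mul_sub_num (hα : Irrational α) :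
    ∀ n, (den α n : ℝ) * α - num α n = (-1) ^ (n + 1) * gap α n
  | 0 => by simp [den, num, gap]
  | 1 => by simp only [den, num, gap, orbit]; rw [Int.fract]; push_cast; ring
  | n + 2 => by
    simp only [den, num]
    push_cast
    linear_combination (digit α n : ℝ) * den_mul_sub_num hα (n + 1) + den_mul_sub_num hα n
      + (-1) ^ (n + 1) * gap_eq_digit_mul_add hα n

theorem den_mul_gap_add (hα : Irrational α) :
    ∀ n, (den α (n + 1) : ℝ) * gap α n + den α n * gap α (n + 1) = 1
  | 0 => by simp [den, gap]
  | n + 1 => by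
    simp only [den]
    push_cast
    linear_combination den_mul_gap_add hα n - (den α (n + 1) : ℝ) * gap_eq_digit_mul_add hα n

theorem den_succ_mul_gap_le_one (hα : Irrational α) (n : ℕ) : (den α (n + 1) : ℝ) * gap α n ≤ 1 := by
  have := mul_nonneg (Nat.cast_nonneg (α := ℝ) (den α n)) (gap_pos hα (n + 1)).le
  linarith [den_mul_gap_add hα n]

theorem den_mul_gap_le_orbit (hα : Irrational α) (n : ℕ) :
    (den α (n + 1) : ℝ) * gap α (n + 1) ≤ orbit α n :=
  calc (den α (n + 1) : ℝ) * gap α (n + 1) = den α (n + 1) * gap α n * orbit α n := by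
        rw [gap, mul_assoc]
    _ ≤ 1 * orbit α n := mul_le_mul_of_nonneg_right (den_succ_mul_gap_le_one hα n) (orbit_nonneg n)
    _ = orbit α n := one_mul _

section Greedy

variable {x : ℝ}

/- `resid`, `greedyDigit`, `greedySum` and `ratio` are the `d`, `c`, `Q` and `u` above, and
`candidate α x n = Q_{n+1} - q_n`. -/

noncomputable def resid (α x : ℝ) : ℕ → ℝ
  | 0 => Int.fract x
  | n + 1 => (⌊resid α x n / gap α (n + 1)⌋₊ + 1) * gap α (n + 1) - resid α x n

noncomputable def greedyDigit (α x : ℝ) (n : ℕ) : ℕ := ⌊resid α x n / gap α (n + 1)⌋₊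

noncomputable def greedySum (α x : ℝ) (n : ℕ) : ℕ :=
  ∑ k ∈ Finset.range n, (greedyDigit α x k + 1) * den α (k + 1)

noncomputable def candidate (α x : ℝ) (n : ℕ) : ℕ :=
  greedySum α x n + greedyDigit α x n * den α (n + 1)

noncomputable def ratio (α x : ℝ) (n : ℕ) : ℝ := resid α x n / gap α n

theorem resid_succ (n : ℕ) :
    resid α x (n + 1) = (greedyDigit α x n + 1) * gap α (n + 1) - resid α x n := rfl

theorem greedySum_succ (n : ℕ) :
    greedySum α x (n + 1) = greedySum α x n + (greedyDigit α x n + 1) * den α (n + 1) :=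
  Finset.sum_range_succ _ n

theorem resid_mem (hα : Irrational α) : ∀ n, 0 ≤ resid α x n ∧ resid α x n ≤ gap α n
  | 0 => ⟨Int.fract_nonneg x, (Int.fract_lt_one x).le⟩
  | n + 1 => by
    have hE := gap_pos hα (n + 1)
    have hlo : (greedyDigit α x n : ℝ) * gap α (n + 1) ≤ resid α x n :=
      (le_div_iff₀ hE).1 (Nat.floor_le (div_nonneg (resid_mem hα n).1 hE.le))
    have hhi : resid α x n < (greedyDigit α x n + 1) * gap α (n + 1) :=
      (div_lt_iff₀ hE).1 (Nat.lt_floor_add_one _)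
    rw [resid_succ]
    constructor <;> linarith

theorem ratio_nonneg (hα : Irrational α) (n : ℕ) : 0 ≤ ratio α x n :=
  div_nonneg (resid_mem hα n).1 (gap_pos hα n).le

theorem ratio_le_one (hα : Irrational α) (n : ℕ) : ratio α x n ≤ 1 :=
  div_le_one_of_le₀ (resid_mem hα n).2 (gap_pos hα n).le

theorem greedyDigit_le_digit (hα : Irrational α) (n : ℕ) : greedyDigit α x n ≤ digit α n := by
  have hE := gap_pos hα (n + 1)
  have hr : resid α x n / gap α (n + 1) ≤ (orbit α n)⁻¹ := by
    rw [div_le_iff₀ hE]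
    calc resid α x n ≤ gap α n := (resid_mem hα n).2
      _ = (orbit α n)⁻¹ * gap α (n + 1) := by rw [gap]; field_simp [(orbit_pos hα n).ne']
  rw [← Nat.lt_succ_iff, greedyDigit, Nat.floor_lt (div_nonneg (resid_mem hα n).1 hE.le)]
  push_cast
  linarith [digit_add_orbit_succ (α := α) n, orbit_lt_one (α := α) (n + 1)]

theorem greedySum_le (hα : Irrational α) : ∀ n, greedySum α x n ≤ 2 * (den α (n + 1) + den α n)
  | 0 => by simp [greedySum]
  | n + 1 => by
    have ih := greedySum_le hα n
    have hg := Nat.mul_le_mul_right (den α (n + 1)) (greedyDigit_le_digit hα (x := x) n)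
    have hQ : den α (n + 1) ≤ digit α n * den α (n + 1) :=
      Nat.le_mul_of_pos_left _ (one_le_digit hα n)
    rw [greedySum_succ, add_one_mul]
    show _ ≤ 2 * (digit α n * den α (n + 1) + den α n + den α (n + 1))
    omega

theorem den_le_greedySum : ∀ n, den α n ≤ greedySum α x n
  | 0 => Nat.zero_le _
  | n + 1 => by
    rw [greedySum_succ]
    exact (Nat.le_mul_of_pos_left _ (Nat.succ_pos _)).trans (Nat.le_add_left _ _)

theorem tendsto_candidate (hα : Irrational α) : Tendsto (candidate α x) atTop atTop :=
  tendsto_atTop_mono (fun n => den_le_greedySum n |>.trans (Nat.le_add_right _ _)) (tendsto_den hα)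

theorem greedySum_mul_sub (hα : Irrational α) :
    ∀ n, ∃ k : ℤ, (greedySum α x n : ℝ) * α - x = k + (-1) ^ (n + 1) * resid α x n
  | 0 => ⟨-⌊x⌋, by
      simp only [greedySum, resid, Finset.range_zero, Finset.sum_empty]
      rw [Int.fract]
      push_cast
      ring⟩
  | n + 1 => by
    obtain ⟨k, hk⟩ := greedySum_mul_sub hα n
    refine ⟨k + (greedyDigit α x n + 1) * num α (n + 1), ?_⟩
    rw [greedySum_succ, resid_succ]
    push_cast
    linear_combination hk + ((greedyDigit α x n : ℝ) + 1) * den_mul_sub_num hα (n + 1)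

theorem candidate_mul_sub (hα : Irrational α) (n : ℕ) :
    ∃ k : ℤ, (candidate α x n : ℝ) * α - x
      = k + (-1) ^ (n + 1) * (gap α (n + 1) - resid α x (n + 1)) := by
  obtain ⟨k, hk⟩ := greedySum_mul_sub hα (x := x) n
  refine ⟨k + greedyDigit α x n * num α (n + 1), ?_⟩
  rw [candidate, resid_succ]
  push_cast
  linear_combination hk + (greedyDigit α x n : ℝ) * den_mul_sub_num hα (n + 1)

theorem greedySum_mul_gap_le (hα : Irrational α) (n : ℕ) :
    (greedySum α x n : ℝ) * gap α (n + 1) ≤ 4 * orbit α n := by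
  have hS : (greedySum α x n : ℝ) ≤ 2 * (den α (n + 1) + den α n) := by
    exact_mod_cast greedySum_le hα n
  have hQ : (den α n : ℝ) ≤ den α (n + 1) := by exact_mod_cast den_mono hα n.le_succ
  calc (greedySum α x n : ℝ) * gap α (n + 1) ≤ 4 * (den α (n + 1) * gap α (n + 1)) := by
        nlinarith [gap_pos hα (n + 1)]
    _ ≤ 4 * orbit α n := by linarith [den_mul_gap_le_orbit hα n]

theorem candidate_mul_nint_le (hα : Irrational α) (n : ℕ) :
    (candidate α x n : ℝ) * nint (candidate α x n * α - x)
      ≤ ratio α x n * (1 - ratio α x (n + 1)) + 4 * orbit α n := by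
  obtain ⟨hd, hd'⟩ := resid_mem hα (x := x) (n + 1)
  have hnint : nint (candidate α x n * α - x) ≤ gap α (n + 1) - resid α x (n + 1) := by
    obtain ⟨k, hk⟩ := candidate_mul_sub hα (x := x) n
    calc _ ≤ |(-1) ^ (n + 1) * (gap α (n + 1) - resid α x (n + 1))| :=
          nint_le_abs_of_eq_intCast_add k hk
      _ = _ := by
        rw [abs_mul, abs_pow, abs_neg, abs_one, one_pow, one_mul, abs_of_nonneg (by linarith)]
  have hdigit : (greedyDigit α x n : ℝ) * gap α (n + 1) ≤ resid α x n := by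
    rw [resid_succ] at hd'
    linarith
  have hresid : resid α x n * den α (n + 1) ≤ ratio α x n :=
    calc resid α x n * den α (n + 1) = ratio α x n * (den α (n + 1) * gap α n) := by
          rw [ratio]; field_simp [(gap_pos hα n).ne']
      _ ≤ ratio α x n * 1 :=
          mul_le_mul_of_nonneg_left (den_succ_mul_gap_le_one hα n) (ratio_nonneg hα n)
      _ = ratio α x n := mul_one _
  have hsplit : gap α (n + 1) - resid α x (n + 1) = (1 - ratio α x (n + 1)) * gap α (n + 1) := by
    rw [ratio]; field_simp [(gap_pos hα (n + 1)).ne']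
  have hu : 0 ≤ 1 - ratio α x (n + 1) := sub_nonneg.2 (ratio_le_one hα _)
  calc (candidate α x n : ℝ) * nint (candidate α x n * α - x)
      ≤ candidate α x n * (gap α (n + 1) - resid α x (n + 1)) :=
        mul_le_mul_of_nonneg_left hnint (Nat.cast_nonneg _)
    _ = greedySum α x n * (gap α (n + 1) - resid α x (n + 1))
        + greedyDigit α x n * gap α (n + 1) * den α (n + 1) * (1 - ratio α x (n + 1)) := by
        rw [candidate, Nat.cast_add, Nat.cast_mul, hsplit]; ring
    _ ≤ greedySum α x n * gap α (n + 1) + resid α x n * den α (n + 1) * (1 - ratio α x (n + 1)) :=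
        add_le_add (mul_le_mul_of_nonneg_left (by linarith) (Nat.cast_nonneg _))
          (mul_le_mul_of_nonneg_right (mul_le_mul_of_nonneg_right hdigit (Nat.cast_nonneg _)) hu)
    _ ≤ 4 * orbit α n + ratio α x n * (1 - ratio α x (n + 1)) :=
        add_le_add (greedySum_mul_gap_le hα n) (mul_le_mul_of_nonneg_right hresid hu)
    _ = _ := add_comm _ _

end Greedy

theorem liminf_mul_nint_le (hα : Irrational α) (ht : Tendsto (orbit α) atTop (𝓝 0)) (x : ℝ) :
    liminf (fun q : ℕ => (q : ℝ) * nint (q * α - x)) atTop ≤ 1 / 4 := by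
  refine le_of_forall_pos_le_add fun η hη => liminf_le_of_frequently_le ?_ ?_
  · have hsmall : ∀ᶠ n in atTop, 4 * orbit α n < η / 2 := by
      have h4 := ht.const_mul 4
      rw [mul_zero] at h4
      exact h4.eventually (gt_mem_nhds (half_pos hη))
    have hfreq := frequently_mul_one_sub_succ_le (fun n => ratio_nonneg hα (x := x) n)
      (fun n => ratio_le_one hα (x := x) n) (half_pos hη)
    refine (tendsto_candidate hα (x := x)).frequently ((hfreq.and_eventually hsmall).mono ?_)
    rintro n ⟨hu, horbit⟩
    linarith [candidate_mul_nint_le hα (x := x) n]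
  · exact isBoundedUnder_of ⟨0, fun q => mul_nonneg (Nat.cast_nonneg q) (abs_nonneg _)⟩

theorem intFractPair_stream_succ (hα : Irrational α) : ∀ n,
    GenContFract.IntFractPair.stream α (n + 1) = some ⟨⌊(orbit α n)⁻¹⌋, orbit α (n + 1)⟩
  | 0 => by
    rw [GenContFract.IntFractPair.stream_succ_of_some (p := ⟨⌊α⌋, orbit α 0⟩) rfl
      (orbit_irrational hα 0).ne_zero]
    rfl
  | n + 1 => by
    rw [GenContFract.IntFractPair.stream_succ_of_some (intFractPair_stream_succ hα n)
      (orbit_irrational hα (n + 1)).ne_zero]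
    rfl

theorem partialQuotient_eq_digit (hα : Irrational α) (n : ℕ) : partialQuotient α n = digit α n := by
  rw [partialQuotient, GenContFract.partDen_eq_s_b
    (GenContFract.get?_of_eq_some_of_succ_get?_intFractPair_stream (intFractPair_stream_succ hα n))]
  exact (natCast_floor_eq_intCast_floor (inv_nonneg.2 (orbit_nonneg n))).symm

end GaussMap

theorem stmt3 (α : ℝ) (hα : Irrational α)
    (ha : PartialQuotientsTendToInfinity α) :
    ∀ ε : ℝ, 1 / 4 < ε → badSetPlus α ε = ∅ := by
  intro ε hε
  have ht : Tendsto (GaussMap.orbit α) atTop (𝓝 0) :=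
    GaussMap.tendsto_orbit_zero (ha.congr fun n => GaussMap.partialQuotient_eq_digit hα n)
  refine Set.eq_empty_of_forall_notMem fun x hx => ?_
  exact not_le.2 hε (hx.2.trans (GaussMap.liminf_mul_nint_le hα ht x))
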